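/- arXiv:1701.02350 — 7 statements merged into one kernel-verified Lean document; each statement's English description precedes it below -/
import Mathlib

section
/- Let E be a real inner product space and let P, Q, R, S ∈ E. Then ‖P−R‖² + ‖Q−S‖² ≤ ‖P−Q‖² + ‖Q−R‖² + ‖R−S‖² + ‖S−P‖² − (‖S−P‖ − ‖Q−R‖)². -/
/-! The diagonals of `PQRS` exceed the sides `PQ` and `RS` by exactly `2⟪Q - R, P - S⟫`, while the
right-hand side exceeds them by `2‖Q - R‖‖S - P‖`; so the inequality is Cauchy–Schwarz. -/

open RealInnerProductSpace

theorem norm_sub_sq_add_norm_sub_sq_eq_add_inner {E : Type*} [NormedAddCommGroup E]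
    [InnerProductSpace ℝ E] (P Q R S : E) :
    ‖P - R‖ ^ 2 + ‖Q - S‖ ^ 2 = ‖P - Q‖ ^ 2 + ‖R - S‖ ^ 2 + 2 * ⟪Q - R, P - S⟫ := by
  have hPR : P - R = (P - Q) + (Q - R) := by abel
  have hQS : Q - S = (Q - R) + (R - S) := by abel
  have hPS : P - S = (P - Q) + (Q - R) + (R - S) := by abel
  rw [hPR, hQS, hPS, norm_add_sq_real, norm_add_sq_real, inner_add_right, inner_add_right,
    real_inner_self_eq_norm_sq, real_inner_comm (P - Q)]
  ring

/-- Euclidean quadrilateral inequality: the sum of squared diagonals of the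
quadrilateral `PQRS` is bounded by the sum of squared sides minus the squared difference of
the opposite sides `SP` and `QR`. -/
theorem quadrilateral_inequality {E : Type*} [NormedAddCommGroup E]
    [InnerProductSpace ℝ E] (P Q R S : E) :
    ‖P - R‖ ^ 2 + ‖Q - S‖ ^ 2
      ≤ ‖P - Q‖ ^ 2 + ‖Q - R‖ ^ 2 + ‖R - S‖ ^ 2 + ‖S - P‖ ^ 2
        - (‖S - P‖ - ‖Q - R‖) ^ 2 := by
  rw [norm_sub_sq_add_norm_sub_sq_eq_add_inner, norm_sub_rev S P]
  linear_combination 2 * real_inner_le_norm (Q - R) (P - S)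
end

section
/- Let E be a real inner product space and let P, Q, R, S ∈ E be unit vectors. Then ⟨P,R⟩ + ⟨Q,S⟩ ≥ −2 + ⟨P,Q⟩ + ⟨R,S⟩ + ⟨Q,R⟩ + ⟨P,S⟩ + (1/2)·(√(2 − 2⟨Q,R⟩) − √(2 − 2⟨P,S⟩))². -/
open scoped RealInnerProductSpace

lemma norm_sub_unit_sqrt {E : Type*} [NormedAddCommGroup E]
    [InnerProductSpace ℝ E] (x y : E) (hx : ‖x‖ = 1) (hy : ‖y‖ = 1) :
    ‖x - y‖ = Real.sqrt (2 - 2 * ⟪x, y⟫) := by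
  have h : ‖x - y‖ ^ 2 = 2 - 2 * ⟪x, y⟫ := by
    rw [norm_sub_sq_real, hx, hy]; ring
  rw [← h, Real.sqrt_sq (norm_nonneg _)]

/-- Exact spherical form of Reshetnyak's diagonal estimate for a quadrilateral
`PQRS` of unit vectors: `⟨P,R⟩ + ⟨Q,S⟩ ≥ −2 + ⟨P,Q⟩ + ⟨R,S⟩ + ⟨Q,R⟩ + ⟨P,S⟩
+ (1/2)(√(2 − 2⟨Q,R⟩) − √(2 − 2⟨P,S⟩))²`. -/
theorem reshetnyak_spherical_exact {E : Type*} [NormedAddCommGroup E]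
    [InnerProductSpace ℝ E] (P Q R S : E)
    (hP : ‖P‖ = 1) (hQ : ‖Q‖ = 1) (hR : ‖R‖ = 1) (hS : ‖S‖ = 1) :
    ⟪P, R⟫ + ⟪Q, S⟫
      ≥ -2 + ⟪P, Q⟫ + ⟪R, S⟫ + ⟪Q, R⟫ + ⟪P, S⟫
        + (1 / 2) * (Real.sqrt (2 - 2 * ⟪Q, R⟫) - Real.sqrt (2 - 2 * ⟪P, S⟫)) ^ 2 := by
  have hQR := norm_sub_unit_sqrt Q R hQ hR
  have hPS := norm_sub_unit_sqrt P S hP hS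
  rw [← hQR, ← hPS]
  have hCS : -(‖P - S‖ * ‖R - Q‖) ≤ ⟪P - S, R - Q⟫ :=
    neg_le_of_abs_le (abs_real_inner_le_norm _ _)
  have hexp : ⟪P - S, R - Q⟫ = ⟪P, R⟫ - ⟪P, Q⟫ - ⟪R, S⟫ + ⟪Q, S⟫ := by
    simp [inner_sub_sub_self, inner_sub_left, inner_sub_right,
      real_inner_comm S R, real_inner_comm S Q]
    ring
  have hQRsq : ‖Q - R‖ ^ 2 = 2 - 2 * ⟪Q, R⟫ := by
    rw [norm_sub_sq_real, hQ, hR]; ring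
  have hPSsq : ‖P - S‖ ^ 2 = 2 - 2 * ⟪P, S⟫ := by
    rw [norm_sub_sq_real, hP, hS]; ring
  rw [norm_sub_rev R Q] at hCS
  have key : (‖Q - R‖ - ‖P - S‖) ^ 2
      = (2 - 2 * ⟪Q, R⟫) + (2 - 2 * ⟪P, S⟫) - 2 * (‖P - S‖ * ‖Q - R‖) := by
    rw [← hQRsq, ← hPSsq]; ring
  linarith [hCS, key]
end

section
/- There exists a universal constant C > 0 with the following property. Let E be a real inner product space and let P, Q, R, S ∈ E be unit vectors; write d_{XY} := arccos⟨X,Y⟩ for the spherical distance between unit vectors X, Y. Then cos d_{PR} + cos d_{QS} ≥ −(1/2)(d_{PQ}² + d_{RS}²) + (1/4)(1 + cos d_{PS})(d_{QR} − d_{PS})² + cos d_{QR} + cos d_{PS} − C·(d_{PQ}³ + d_{RS}³ + |d_{QR} − d_{PS}|³). -/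
/-!
Writing `θ_XY = arccos ⟪X, Y⟫`, the left side minus `cos θ_QR + cos θ_PS` is `⟪P - Q, R - S⟫`.
Since `(P - Q) + (R - S) = (P - S) - (Q - R)`, expanding `‖(P - Q) + (R - S)‖²` and using the
reverse triangle inequality bounds `2 ⟪P - Q, R - S⟫` below by
`(‖P - S‖ - ‖Q - R‖)² - ‖P - Q‖² - ‖R - S‖²`. Chords are shorter than arcs, which handles the
last two terms, and the chords `‖P - S‖ = 2 sin (θ_PS / 2)`, `‖Q - R‖ = 2 sin (θ_QR / 2)` differ
by `cos (θ_PS / 2) (θ_QR - θ_PS)` up to a quadratic error (first-order Taylor expansion of `sin`);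
finally `1 + cos θ = 2 cos² (θ / 2)`. This gives the estimate with `C = 1 / 2`.
-/

open Real
open scoped RealInnerProductSpace

namespace Real

lemma abs_sin_add_sub_sin_sub_mul_cos_le (y h : ℝ) :
    |sin (y + h) - sin y - h * cos y| ≤ |h| ^ 3 / 6 + h ^ 2 / 2 := by
  have hsin : |sin h - h| ≤ |h| ^ 3 / 6 := abs_sub_comm h (sin h) ▸ abs_sub_sin_le h
  have hcos : |cos h - 1| ≤ h ^ 2 / 2 := by
    rw [abs_of_nonpos (by linarith [cos_le_one h])]
    linarith [one_sub_sq_div_two_le_cos (x := h)]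
  have hsy : |sin y| ≤ 1 := abs_sin_le_one y
  have hcy : |cos y| ≤ 1 := abs_cos_le_one y
  calc |sin (y + h) - sin y - h * cos y|
      = |cos y * (sin h - h) + sin y * (cos h - 1)| := by rw [sin_add]; congr 1; ring
    _ ≤ |cos y| * |sin h - h| + |sin y| * |cos h - 1| := by
        rw [← abs_mul, ← abs_mul]
        exact abs_add_le _ _
    _ ≤ 1 * (|h| ^ 3 / 6) + 1 * (h ^ 2 / 2) := by gcongr
    _ = |h| ^ 3 / 6 + h ^ 2 / 2 := by ring

lemma cos_sq_mul_sq_sub_le_sq_sin_sub_sin (x y : ℝ) :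
    cos y ^ 2 * (x - y) ^ 2 - |x - y| ^ 3 - |x - y| ^ 4 / 3 ≤ (sin x - sin y) ^ 2 := by
  set h := x - y
  set r := sin x - sin y - h * cos y
  have hr : |r| ≤ |h| ^ 3 / 6 + h ^ 2 / 2 := by
    simpa [r, h] using abs_sin_add_sub_sin_sub_mul_cos_le y h
  have hhc : |h * cos y| ≤ |h| := by
    rw [abs_mul]; exact mul_le_of_le_one_right (abs_nonneg h) (abs_cos_le_one y)
  have hcross : -(|h| * (|h| ^ 3 / 6 + h ^ 2 / 2)) ≤ h * cos y * r :=
    calc -(|h| * (|h| ^ 3 / 6 + h ^ 2 / 2)) ≤ -(|h * cos y| * |r|) := by gcongr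
      _ ≤ h * cos y * r := by rw [← abs_mul]; exact neg_abs_le _
  calc cos y ^ 2 * h ^ 2 - |h| ^ 3 - |h| ^ 4 / 3
      = (h * cos y) ^ 2 - 2 * (|h| * (|h| ^ 3 / 6 + h ^ 2 / 2)) := by
        linear_combination (-|h|) * sq_abs h
    _ ≤ (h * cos y) ^ 2 + 2 * (h * cos y * r) := by linarith
    _ ≤ (h * cos y + r) ^ 2 := by linarith [sq_nonneg r]
    _ = (sin x - sin y) ^ 2 := by simp only [r]; ring

lemma cos_sq_half_mul_sq_sub_le_sq_two_mul_sin_half_sub {c e : ℝ} (hce : |c - e| ≤ 6) :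
    cos (e / 2) ^ 2 * (c - e) ^ 2 - |c - e| ^ 3 ≤ (2 * sin (c / 2) - 2 * sin (e / 2)) ^ 2 := by
  have h := cos_sq_mul_sq_sub_le_sq_sin_sub_sin (c / 2) (e / 2)
  rw [← sub_div, abs_div, abs_two] at h
  have h4 : |c - e| ^ 3 * |c - e| ≤ |c - e| ^ 3 * 6 := by gcongr
  linarith

end Real

section UnitVectors

variable {E : Type*} [NormedAddCommGroup E] [InnerProductSpace ℝ E]

lemma sq_norm_sub_sub_norm_sub_le (P Q R S : E) :
    (‖Q - R‖ - ‖P - S‖) ^ 2 ≤ ‖P - Q‖ ^ 2 + 2 * ⟪P - Q, R - S⟫ + ‖R - S‖ ^ 2 := by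
  have hdiag : (P - S) - (Q - R) = (P - Q) + (R - S) := by abel
  rw [← norm_add_sq_real, ← hdiag, norm_sub_rev (P - S), ← sq_abs]
  exact pow_le_pow_left₀ (abs_nonneg _) (abs_norm_sub_norm_le _ _) 2

variable {X Y : E}

lemma cos_arccos_inner (hX : ‖X‖ = 1) (hY : ‖Y‖ = 1) : cos (arccos ⟪X, Y⟫) = ⟪X, Y⟫ :=
  cos_arccos (neg_one_le_real_inner_of_norm_eq_one hX hY) (real_inner_le_one_of_norm_eq_one hX hY)

lemma norm_sub_eq_two_mul_sin_arccos_inner_div_two (hX : ‖X‖ = 1) (hY : ‖Y‖ = 1) :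
    ‖X - Y‖ = 2 * sin (arccos ⟪X, Y⟫ / 2) := by
  have hsin : 0 ≤ sin (arccos ⟪X, Y⟫ / 2) :=
    sin_nonneg_of_nonneg_of_le_pi (by linarith [arccos_nonneg ⟪X, Y⟫])
      (by linarith [arccos_le_pi ⟪X, Y⟫, pi_pos])
  refine (pow_left_inj₀ (norm_nonneg _) (by positivity) two_ne_zero).mp ?_
  rw [norm_sub_sq_real, hX, hY, mul_pow, sin_sq_eq_half_sub, mul_div_cancel₀ _ two_ne_zero,
    cos_arccos_inner hX hY]
  ring

lemma norm_sub_le_arccos_inner (hX : ‖X‖ = 1) (hY : ‖Y‖ = 1) : ‖X - Y‖ ≤ arccos ⟪X, Y⟫ := by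
  rw [norm_sub_eq_two_mul_sin_arccos_inner_div_two hX hY]
  linarith [sin_le (div_nonneg (arccos_nonneg ⟪X, Y⟫) zero_le_two)]

lemma cos_sq_half_mul_sq_sub_le_two_mul_inner_sub_sub {P Q R S : E} (hP : ‖P‖ = 1) (hQ : ‖Q‖ = 1)
    (hR : ‖R‖ = 1) (hS : ‖S‖ = 1) :
    cos (arccos ⟪P, S⟫ / 2) ^ 2 * (arccos ⟪Q, R⟫ - arccos ⟪P, S⟫) ^ 2
        - |arccos ⟪Q, R⟫ - arccos ⟪P, S⟫| ^ 3 - arccos ⟪P, Q⟫ ^ 2 - arccos ⟪R, S⟫ ^ 2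
      ≤ 2 * ⟪P - Q, R - S⟫ := by
  have hdist : |arccos ⟪Q, R⟫ - arccos ⟪P, S⟫| ≤ 6 := abs_sub_le_iff.mpr
    ⟨by linarith [arccos_le_pi ⟪Q, R⟫, arccos_nonneg ⟪P, S⟫, pi_le_four],
     by linarith [arccos_le_pi ⟪P, S⟫, arccos_nonneg ⟪Q, R⟫, pi_le_four]⟩
  have hchords := cos_sq_half_mul_sq_sub_le_sq_two_mul_sin_half_sub hdist
  rw [← norm_sub_eq_two_mul_sin_arccos_inner_div_two hQ hR,
    ← norm_sub_eq_two_mul_sin_arccos_inner_div_two hP hS] at hchords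
  have hPQ := pow_le_pow_left₀ (norm_nonneg _) (norm_sub_le_arccos_inner hP hQ) 2
  have hRS := pow_le_pow_left₀ (norm_nonneg _) (norm_sub_le_arccos_inner hR hS) 2
  linarith [sq_norm_sub_sub_norm_sub_le P Q R S]

end UnitVectors

/-- Reshetnyak's lemma for a spherical quadrilateral `PQRS`, with explicit cubic
error term: there is a universal constant `C > 0` such that for unit vectors `P, Q, R, S` in any
real inner product space, writing `d_{XY} := arccos⟨X,Y⟩`,
`cos d_{PR} + cos d_{QS} ≥ −(1/2)(d_{PQ}² + d_{RS}²) + (1/4)(1 + cos d_{PS})(d_{QR} − d_{PS})²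
+ cos d_{QR} + cos d_{PS} − C (d_{PQ}³ + d_{RS}³ + |d_{QR} − d_{PS}|³)`. -/
theorem reshetnyak_diagonal_estimate :
    ∃ C : ℝ, 0 < C ∧
      ∀ (E : Type*) [NormedAddCommGroup E] [InnerProductSpace ℝ E]
        (P Q R S : E), ‖P‖ = 1 → ‖Q‖ = 1 → ‖R‖ = 1 → ‖S‖ = 1 →
        Real.cos (Real.arccos ⟪P, R⟫) + Real.cos (Real.arccos ⟪Q, S⟫)
          ≥ -(1 / 2) * ((Real.arccos ⟪P, Q⟫) ^ 2 + (Real.arccos ⟪R, S⟫) ^ 2)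
            + (1 / 4) * (1 + Real.cos (Real.arccos ⟪P, S⟫))
              * (Real.arccos ⟪Q, R⟫ - Real.arccos ⟪P, S⟫) ^ 2
            + Real.cos (Real.arccos ⟪Q, R⟫) + Real.cos (Real.arccos ⟪P, S⟫)
            - C * ((Real.arccos ⟪P, Q⟫) ^ 3 + (Real.arccos ⟪R, S⟫) ^ 3
              + |Real.arccos ⟪Q, R⟫ - Real.arccos ⟪P, S⟫| ^ 3) := by
  refine ⟨1 / 2, one_half_pos, fun E _ _ P Q R S hP hQ hR hS => ?_⟩
  have hkey := cos_sq_half_mul_sq_sub_le_two_mul_inner_sub_sub hP hQ hR hS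
  simp only [inner_sub_left, inner_sub_right] at hkey
  have hhalf : 1 + cos (arccos ⟪P, S⟫) = 2 * cos (arccos ⟪P, S⟫ / 2) ^ 2 := by
    rw [cos_sq, mul_div_cancel₀ _ two_ne_zero]; ring
  rw [hhalf, cos_arccos_inner hP hR, cos_arccos_inner hQ hS, cos_arccos_inner hQ hR,
    cos_arccos_inner hP hS]
  linarith [pow_nonneg (arccos_nonneg ⟪P, Q⟫) 3, pow_nonneg (arccos_nonneg ⟪R, S⟫) 3]
end

section
/- There exists a universal constant C > 0 with the following property. Let E be a real inner product space and let P, Q, R, S ∈ E be unit vectors with P + S ≠ 0 and Q + R ≠ 0. Set P_{1/2} := (P+S)/‖P+S‖ and Q_{1/2} := (Q+R)/‖Q+R‖, and write d_{XY} := arccos⟨X,Y⟩ for unit vectors X, Y. Then cos²(d_{PS}/2) · d_{Q_{1/2}P_{1/2}}² ≤ (1/2)(d_{PQ}² + d_{RS}²) − (1/4)(d_{QR} − d_{PS})² + C·(d_{PQ} + d_{RS} + d_{P_{1/2}Q_{1/2}} + |d_{QR} − d_{PS}|)³. -/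
/-!
Write `m` for the angle between the Euclidean midpoints `P + S` and `Q + R`. For unit vectors
`‖X + Y‖ = 2 cos (∠XY / 2)` and `‖X - Y‖ = 2 sin (∠XY / 2)`, so the parallelogram law in the
quadrilateral, `‖(P + S) - (Q + R)‖² ≤ 2‖P - Q‖² + 2‖S - R‖² - (‖P - S‖ - ‖Q - R‖)²`, together with
chord ≤ arc, bounds `2 cos (∠PS / 2) cos (∠QR / 2) (1 - cos m)` by the right-hand side up to the
difference between the chord `2 - 2 cos ((∠QR - ∠PS) / 2)` of the unit circle and its arc, which
is cubic. Replacing `2 (1 - cos m)` by `m²` and `cos (∠QR / 2)` by `cos (∠PS / 2)` costs only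
further cubic terms, and the spherical midpoints have the same angle `m` as `P + S` and `Q + R`.
-/

open scoped RealInnerProductSpace

namespace Real

lemma sq_le_two_mul_one_sub_cos_add_pow_three {x : ℝ} (hx : 0 ≤ x) :
    x ^ 2 ≤ 2 * (1 - cos x) + x ^ 3 := by
  rcases le_or_gt x 1 with hx1 | hx1
  · have hcos := (abs_le.mp (cos_bound (abs_le.mpr ⟨by linarith, hx1⟩))).2
    rw [abs_of_nonneg hx] at hcos
    have hx43 : x ^ 4 ≤ x ^ 3 := pow_le_pow_of_le_one hx hx1 (by norm_num)
    linarith [pow_nonneg hx 4]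
  · nlinarith [cos_le_one x]

lemma sin_sub_sin_sq_add_cos_sub_cos_sq (x y : ℝ) :
    (sin x - sin y) ^ 2 + (cos x - cos y) ^ 2 = 2 - 2 * cos (x - y) := by
  rw [cos_sub]
  linear_combination sin_sq_add_cos_sq x + sin_sq_add_cos_sq y

lemma sq_mul_sq_le_mul_mul_two_mul_one_sub_cos_add {c d t m : ℝ} (hc₀ : 0 ≤ c) (hc₁ : c ≤ 1)
    (hd₀ : 0 ≤ d) (hd₁ : d ≤ 1) (hcd : |c - d| ≤ t) (hm : 0 ≤ m) :
    c ^ 2 * m ^ 2 ≤ c * d * (2 * (1 - cos m)) + m ^ 3 + t * m ^ 2 := by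
  have hm2 := sq_le_two_mul_one_sub_cos_add_pow_three hm
  have hcd₁ : c * d ≤ 1 := mul_le_one₀ hc₁ hd₀ hd₁
  have hcd' : c * (c - d) ≤ t := by
    nlinarith [le_abs_self (c - d), abs_nonneg (c - d)]
  nlinarith [mul_le_mul_of_nonneg_left hm2 (mul_nonneg hc₀ hd₀), pow_nonneg hm 3, sq_nonneg m]

end Real

lemma norm_add_sub_add_sq_le {V : Type*} [NormedAddCommGroup V] [InnerProductSpace ℝ V]
    (p q r s : V) :
    ‖(p + s) - (q + r)‖ ^ 2 ≤ 2 * ‖p - q‖ ^ 2 + 2 * ‖s - r‖ ^ 2 - (‖p - s‖ - ‖q - r‖) ^ 2 := by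
  have hpar := parallelogram_law_with_norm ℝ (p - q) (s - r)
  have hdiag : (‖p - s‖ - ‖q - r‖) ^ 2 ≤ ‖(p - q) - (s - r)‖ ^ 2 := by
    rw [← sq_abs, show (p - q) - (s - r) = (p - s) - (q - r) by abel]
    exact pow_le_pow_left₀ (abs_nonneg _) (abs_norm_sub_norm_le _ _) 2
  rw [show (p + s) - (q + r) = (p - q) + (s - r) by abel]
  linarith

namespace InnerProductGeometry

open Real

variable {V : Type*} [NormedAddCommGroup V] [InnerProductSpace ℝ V] {x y : V}

lemma arccos_inner_eq_angle_of_norm_eq_one (hx : ‖x‖ = 1) (hy : ‖y‖ = 1) :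
    arccos ⟪x, y⟫ = angle x y := by
  simp [angle, hx, hy]

lemma arccos_inner_inv_norm_smul (x y : V) :
    arccos ⟪‖x‖⁻¹ • x, ‖y‖⁻¹ • y⟫ = angle x y := by
  rw [angle, real_inner_smul_left, real_inner_smul_right, div_eq_mul_inv, mul_inv]
  ring_nf

lemma norm_add_eq_two_mul_cos_half_angle (hx : ‖x‖ = 1) (hy : ‖y‖ = 1) :
    ‖x + y‖ = 2 * cos (angle x y / 2) := by
  have hcos : 0 ≤ cos (angle x y / 2) := cos_nonneg_of_mem_Icc
    ⟨by linarith [pi_pos, angle_nonneg x y], by linarith [angle_le_pi x y]⟩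
  rw [← sq_eq_sq₀ (norm_nonneg _) (by positivity), norm_add_sq_real, hx, hy,
    inner_eq_cos_angle_of_norm_eq_one hx hy, mul_pow, cos_sq (angle x y / 2),
    mul_div_cancel₀ _ two_ne_zero]
  ring

lemma norm_sub_eq_two_mul_sin_half_angle (hx : ‖x‖ = 1) (hy : ‖y‖ = 1) :
    ‖x - y‖ = 2 * sin (angle x y / 2) := by
  have hsin : 0 ≤ sin (angle x y / 2) := sin_nonneg_of_nonneg_of_le_pi
    (by linarith [angle_nonneg x y]) (by linarith [pi_pos, angle_le_pi x y])
  rw [← sq_eq_sq₀ (norm_nonneg _) (by positivity), norm_sub_sq_real, hx, hy,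
    inner_eq_cos_angle_of_norm_eq_one hx hy, mul_pow, sin_sq, cos_sq (angle x y / 2),
    mul_div_cancel₀ _ two_ne_zero]
  ring

lemma norm_sub_le_angle (hx : ‖x‖ = 1) (hy : ‖y‖ = 1) : ‖x - y‖ ≤ angle x y := by
  rw [norm_sub_eq_two_mul_sin_half_angle hx hy]
  linarith [sin_le (by linarith [angle_nonneg x y] : 0 ≤ angle x y / 2)]


variable {P Q R S : V}

lemma two_mul_cos_half_mul_cos_half_mul_one_sub_cos_angle_le (hP : ‖P‖ = 1) (hQ : ‖Q‖ = 1)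
    (hR : ‖R‖ = 1) (hS : ‖S‖ = 1) :
    2 * cos (angle P S / 2) * cos (angle Q R / 2) * (1 - cos (angle (P + S) (Q + R)))
      ≤ (1 / 2) * (angle P Q ^ 2 + angle R S ^ 2) - (1 / 4) * (angle Q R - angle P S) ^ 2
        + |angle Q R - angle P S| ^ 3 / 8 := by
  set p := angle P S
  set q := angle Q R
  have hquad := norm_add_sub_add_sq_le P Q R S
  rw [norm_sub_sq_real, ← cos_angle_mul_norm_mul_norm, norm_add_eq_two_mul_cos_half_angle hP hS,
    norm_add_eq_two_mul_cos_half_angle hQ hR, norm_sub_eq_two_mul_sin_half_angle hP hS,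
    norm_sub_eq_two_mul_sin_half_angle hQ hR] at hquad
  have hPQ := pow_le_pow_left₀ (norm_nonneg _) (norm_sub_le_angle hP hQ) 2
  have hSR := pow_le_pow_left₀ (norm_nonneg _) (norm_sub_le_angle hS hR) 2
  rw [angle_comm S R] at hSR
  have hchord := sin_sub_sin_sq_add_cos_sub_cos_sq (p / 2) (q / 2)
  have hcubic := sq_le_two_mul_one_sub_cos_add_pow_three (x := |q - p| / 2) (by positivity)
  have hcos : cos (|q - p| / 2) = cos (p / 2 - q / 2) := by
    rw [← cos_abs (p / 2 - q / 2), abs_sub_comm, ← sub_div, abs_div, abs_two]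
  rw [div_pow, sq_abs, hcos] at hcubic
  linarith

lemma cos_half_sq_mul_angle_add_sq_le (hP : ‖P‖ = 1) (hQ : ‖Q‖ = 1) (hR : ‖R‖ = 1)
    (hS : ‖S‖ = 1) :
    cos (angle P S / 2) ^ 2 * angle (P + S) (Q + R) ^ 2
      ≤ (1 / 2) * (angle P Q ^ 2 + angle R S ^ 2) - (1 / 4) * (angle Q R - angle P S) ^ 2
        + (angle P Q + angle R S + angle (P + S) (Q + R) + |angle Q R - angle P S|) ^ 3 := by
  set T := |angle Q R - angle P S|
  have hdefect := two_mul_cos_half_mul_cos_half_mul_one_sub_cos_angle_le hP hQ hR hS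
  have hhalf : ∀ x y : V, 0 ≤ cos (angle x y / 2) := fun x y => cos_nonneg_of_mem_Icc
    ⟨by linarith [pi_pos, angle_nonneg x y], by linarith [angle_le_pi x y]⟩
  have hlip : |cos (angle P S / 2) - cos (angle Q R / 2)| ≤ T / 2 := by
    refine (abs_cos_sub_cos_le _ _).trans_eq ?_
    rw [← sub_div, abs_div, abs_two, abs_sub_comm]
  have hmain := sq_mul_sq_le_mul_mul_two_mul_one_sub_cos_add (hhalf P S) (cos_le_one _)
    (hhalf Q R) (cos_le_one _) hlip (angle_nonneg (P + S) (Q + R))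
  have hcube : angle (P + S) (Q + R) + T ≤ angle P Q + angle R S + angle (P + S) (Q + R) + T := by
    linarith [angle_nonneg P Q, angle_nonneg R S]
  have hm := angle_nonneg (P + S) (Q + R)
  have hT : 0 ≤ T := abs_nonneg _
  have := pow_le_pow_left₀ (add_nonneg hm hT) hcube 3
  nlinarith [mul_nonneg (sq_nonneg (angle (P + S) (Q + R))) hT, mul_nonneg hm (sq_nonneg T),
    pow_nonneg hT 3]

end InnerProductGeometry

/-- Spherical midpoint estimate (Estimate I) for a quadrilateral `PQRS` of unit
vectors, with spherical midpoints `P_{1/2} = (P+S)/‖P+S‖`, `Q_{1/2} = (Q+R)/‖Q+R‖` and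
`d_{XY} := arccos⟨X,Y⟩`:
`cos²(d_{PS}/2) d_{Q_{1/2}P_{1/2}}² ≤ (1/2)(d_{PQ}² + d_{RS}²) − (1/4)(d_{QR} − d_{PS})²
+ C (d_{PQ} + d_{RS} + d_{P_{1/2}Q_{1/2}} + |d_{QR} − d_{PS}|)³` for a universal `C > 0`. -/
theorem spherical_midpoint_estimate :
    ∃ C : ℝ, 0 < C ∧
      ∀ (E : Type*) [NormedAddCommGroup E] [InnerProductSpace ℝ E]
        (P Q R S : E), ‖P‖ = 1 → ‖Q‖ = 1 → ‖R‖ = 1 → ‖S‖ = 1 →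
        P + S ≠ 0 → Q + R ≠ 0 →
        Real.cos (Real.arccos ⟪P, S⟫ / 2) ^ 2
            * (Real.arccos ⟪‖Q + R‖⁻¹ • (Q + R), ‖P + S‖⁻¹ • (P + S)⟫) ^ 2
          ≤ (1 / 2) * ((Real.arccos ⟪P, Q⟫) ^ 2 + (Real.arccos ⟪R, S⟫) ^ 2)
            - (1 / 4) * (Real.arccos ⟪Q, R⟫ - Real.arccos ⟪P, S⟫) ^ 2
            + C * (Real.arccos ⟪P, Q⟫ + Real.arccos ⟪R, S⟫
              + Real.arccos ⟪‖P + S‖⁻¹ • (P + S), ‖Q + R‖⁻¹ • (Q + R)⟫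
              + |Real.arccos ⟪Q, R⟫ - Real.arccos ⟪P, S⟫|) ^ 3 := by
  refine ⟨1, one_pos, fun E _ _ P Q R S hP hQ hR hS _ _ => ?_⟩
  open InnerProductGeometry in
  rw [arccos_inner_inv_norm_smul, arccos_inner_inv_norm_smul, angle_comm (Q + R),
    arccos_inner_eq_angle_of_norm_eq_one hP hS, arccos_inner_eq_angle_of_norm_eq_one hP hQ,
    arccos_inner_eq_angle_of_norm_eq_one hR hS, arccos_inner_eq_angle_of_norm_eq_one hQ hR,
    one_mul]
  exact InnerProductGeometry.cos_half_sq_mul_angle_add_sq_le hP hQ hR hS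
end

section
/- Let c ≥ 0 and σ₀ > 0, and let f : (0, σ₀) → ℝ be differentiable with f(σ) ≥ 0 and 2(1 − c·σ²)·f(σ) ≤ σ·f'(σ) for all σ ∈ (0, σ₀). Then the function σ ↦ e^{cσ²}·f(σ)/σ² is monotone nondecreasing on (0, σ₀). -/
/-- Integrating the differential inequality in the monotonicity formula:
if `f ≥ 0` is differentiable on `(0,σ₀)` with `2(1 − cσ²) f(σ) ≤ σ f'(σ)` there, then
`σ ↦ e^{cσ²} f(σ)/σ²` is monotone nondecreasing on `(0,σ₀)`. -/
theorem monotonicity_from_differential_inequality (c σ₀ : ℝ) (hc : 0 ≤ c) (hσ₀ : 0 < σ₀)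
    (f f' : ℝ → ℝ)
    (hderiv : ∀ σ ∈ Set.Ioo (0 : ℝ) σ₀, HasDerivAt f (f' σ) σ)
    (hf : ∀ σ ∈ Set.Ioo (0 : ℝ) σ₀, 0 ≤ f σ)
    (hineq : ∀ σ ∈ Set.Ioo (0 : ℝ) σ₀, 2 * (1 - c * σ ^ 2) * f σ ≤ σ * f' σ) :
    MonotoneOn (fun σ => Real.exp (c * σ ^ 2) * f σ / σ ^ 2) (Set.Ioo (0 : ℝ) σ₀) := by
  set g : ℝ → ℝ := fun σ => Real.exp (c * σ ^ 2) * f σ / σ ^ 2 with hg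
  have key : ∀ σ ∈ Set.Ioo (0 : ℝ) σ₀, HasDerivAt g
      (((Real.exp (c * σ ^ 2) * (c * (2 * σ)) * f σ + Real.exp (c * σ ^ 2) * f' σ) * σ ^ 2
        - Real.exp (c * σ ^ 2) * f σ * (2 * σ)) / (σ ^ 2) ^ 2) σ := by
    intro σ hσ
    have hσ0 : σ ≠ 0 := ne_of_gt hσ.1
    have h1 : HasDerivAt (fun σ : ℝ => Real.exp (c * σ ^ 2))
        (Real.exp (c * σ ^ 2) * (c * (2 * σ))) σ := by
      have : HasDerivAt (fun σ : ℝ => c * σ ^ 2) (c * (2 * σ)) σ := by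
        simpa using ((hasDerivAt_pow 2 σ).const_mul c)
      exact this.exp
    have h2 : HasDerivAt (fun σ : ℝ => Real.exp (c * σ ^ 2) * f σ)
        (Real.exp (c * σ ^ 2) * (c * (2 * σ)) * f σ + Real.exp (c * σ ^ 2) * f' σ) σ :=
      h1.mul (hderiv σ hσ)
    have h3 : HasDerivAt (fun σ : ℝ => σ ^ 2) (2 * σ) σ := by
      simpa using hasDerivAt_pow 2 σ
    exact h2.div h3 (pow_ne_zero 2 hσ0)
  have hconv : Convex ℝ (Set.Ioo (0 : ℝ) σ₀) := convex_Ioo _ _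
  have hopen : IsOpen (Set.Ioo (0 : ℝ) σ₀) := isOpen_Ioo
  have hint : interior (Set.Ioo (0 : ℝ) σ₀) = Set.Ioo (0 : ℝ) σ₀ := hopen.interior_eq
  apply monotoneOn_of_deriv_nonneg hconv
  · exact fun σ hσ => (key σ hσ).continuousAt.continuousWithinAt
  · rw [hint]
    exact fun σ hσ => (key σ hσ).differentiableAt.differentiableWithinAt
  · rw [hint]
    intro σ hσ
    rw [(key σ hσ).deriv]
    have hσ0 : 0 < σ := hσ.1
    have hE : 0 < Real.exp (c * σ ^ 2) := Real.exp_pos _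
    have hnum : 0 ≤ (Real.exp (c * σ ^ 2) * (c * (2 * σ)) * f σ + Real.exp (c * σ ^ 2) * f' σ) * σ ^ 2
        - Real.exp (c * σ ^ 2) * f σ * (2 * σ) := by
      have h := hineq σ hσ
      have hfσ := hf σ hσ
      have : 0 ≤ Real.exp (c * σ ^ 2) * σ * (2 * c * σ ^ 2 * f σ + σ * f' σ - 2 * f σ) := by
        apply mul_nonneg (mul_nonneg hE.le hσ0.le)
        nlinarith
      nlinarith
    positivity
end

section
/- For ε ∈ (0,1), define φ_ε : ℝ² → ℝ by φ_ε(x) = 0 if ‖x‖ ≤ ε², φ_ε(x) = (log‖x‖ − 2 log ε)/(− log ε) if ε² ≤ ‖x‖ ≤ ε, and φ_ε(x) = 1 if ‖x‖ ≥ ε. Then the function x ↦ ‖∇φ_ε(x)‖² is integrable on ℝ² with ∫_{ℝ²} ‖∇φ_ε(x)‖² dx = 2π/log(1/ε); in particular ∫_{ℝ²} ‖∇φ_ε(x)‖² dx → 0 as ε → 0⁺. -/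
open MeasureTheory

/-- The logarithmic cutoff `φ_ε` on `ℝ²`: `0` on `{‖x‖ ≤ ε²}`,
`(log‖x‖ − 2 log ε)/(−log ε)` on `{ε² ≤ ‖x‖ ≤ ε}`, and `1` on `{‖x‖ ≥ ε}`. -/
noncomputable def logCutoff (ε : ℝ) (x : EuclideanSpace ℝ (Fin 2)) : ℝ :=
  if ‖x‖ ≤ ε ^ 2 then 0
  else if ‖x‖ ≤ ε then (Real.log ‖x‖ - 2 * Real.log ε) / (-Real.log ε)
  else 1

/-!
Write `φ_ε x = g ‖x‖` with `g` the piecewise radial profile. Off the circles `‖x‖ = ε²`,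
`‖x‖ = ε` (and the origin), which are Lebesgue-null, the chain rule and `‖∇‖x‖‖ = 1` give
`‖∇φ_ε x‖ = |g' ‖x‖|`, where `g' r = 1 / (r log (1/ε))` on `(ε², ε)` and `0` elsewhere.
In polar coordinates the energy is `2π ∫_{ε²}^{ε} r (r log (1/ε))⁻² dr
= 2π log (ε / ε²) / log (1/ε)² = 2π / log (1/ε)`.
-/

open Real Set Filter Metric Topology

theorem norm_fderiv_comp_norm {E : Type*} [NormedAddCommGroup E] [InnerProductSpace ℝ E]
    {g : ℝ → ℝ} {g' : ℝ} {x : E} (hx : x ≠ 0) (hg : HasDerivAt g g' ‖x‖) :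
    ‖fderiv ℝ (fun y => g ‖y‖) x‖ = |g'| := by
  have : Nontrivial E := nontrivial_of_ne x 0 hx
  have hnorm : DifferentiableAt ℝ (‖·‖) x := (contDiffAt_norm ℝ hx).differentiableAt one_ne_zero
  have hcomp : HasFDerivAt (fun y => g ‖y‖) (g' • fderiv ℝ (‖·‖) x) x :=
    hg.comp_hasFDerivAt x hnorm.hasFDerivAt
  rw [hcomp.fderiv, norm_smul, norm_fderiv_norm hnorm, mul_one, Real.norm_eq_abs]

noncomputable def logCutoffProfile (ε r : ℝ) : ℝ :=
  if r ≤ ε ^ 2 then 0 else if r ≤ ε then (log r - 2 * log ε) / (-log ε) else 1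

theorem logCutoff_eq_logCutoffProfile_norm (ε : ℝ) :
    logCutoff ε = fun x => logCutoffProfile ε ‖x‖ := rfl

noncomputable def logCutoffProfileDeriv (ε : ℝ) : ℝ → ℝ :=
  (Ioo (ε ^ 2) ε).indicator fun r => r⁻¹ / (-log ε)

theorem hasDerivAt_logCutoffProfile {ε r : ℝ} (hε : ε ^ 2 ≤ ε) (h₁ : r ≠ ε ^ 2) (h₂ : r ≠ ε) :
    HasDerivAt (logCutoffProfile ε) (logCutoffProfileDeriv ε r) r := by
  rcases h₁.lt_or_gt with hlow | hlow
  · have hconst : logCutoffProfile ε =ᶠ[𝓝 r] fun _ => 0 := by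
      filter_upwards [Iio_mem_nhds hlow] with s hs
      simp [logCutoffProfile, (mem_Iio.1 hs).le]
    rw [logCutoffProfileDeriv, indicator_of_notMem fun h => hlow.not_gt h.1]
    exact (hasDerivAt_const r 0).congr_of_eventuallyEq hconst
  rcases h₂.lt_or_gt with hhigh | hhigh
  · have hlog : logCutoffProfile ε =ᶠ[𝓝 r] fun s => (log s - 2 * log ε) / (-log ε) := by
      filter_upwards [Ioo_mem_nhds hlow hhigh] with s hs
      simp [logCutoffProfile, hs.1.not_ge, hs.2.le]
    have hr : r ≠ 0 := ((sq_nonneg ε).trans_lt hlow).ne'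
    rw [logCutoffProfileDeriv, indicator_of_mem (show r ∈ Ioo _ _ from ⟨hlow, hhigh⟩)]
    exact (((hasDerivAt_log hr).sub_const _).div_const _).congr_of_eventuallyEq hlog
  · have hconst : logCutoffProfile ε =ᶠ[𝓝 r] fun _ => 1 := by
      filter_upwards [Ioi_mem_nhds hhigh] with s hs
      simp [logCutoffProfile, (hε.trans_lt hs).not_ge, (mem_Ioi.1 hs).not_ge]
    rw [logCutoffProfileDeriv, indicator_of_notMem fun h => hhigh.not_gt h.2]
    exact (hasDerivAt_const r 1).congr_of_eventuallyEq hconst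

theorem norm_fderiv_logCutoff_sq_ae {ε : ℝ} (hε : ε ^ 2 ≤ ε) :
    (fun x : EuclideanSpace ℝ (Fin 2) => ‖fderiv ℝ (logCutoff ε) x‖ ^ 2) =ᵐ[volume]
      fun x => logCutoffProfileDeriv ε ‖x‖ ^ 2 := by
  have hsphere (r : ℝ) : ∀ᵐ x : EuclideanSpace ℝ (Fin 2), ‖x‖ ≠ r :=
    (measure_eq_zero_iff_ae_notMem.1 (Measure.addHaar_sphere volume 0 r)).mono fun x hx => by
      simpa using hx
  filter_upwards [hsphere 0, hsphere (ε ^ 2), hsphere ε] with x hx0 hx₁ hx₂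
  rw [logCutoff_eq_logCutoffProfile_norm, norm_fderiv_comp_norm (norm_ne_zero_iff.1 hx0)
    (hasDerivAt_logCutoffProfile hε hx₁ hx₂), sq_abs]

theorem setIntegral_Ioi_mul_logCutoffProfileDeriv_sq {ε : ℝ} (hε : ε ∈ Ioo 0 1) :
    ∫ r in Ioi 0, r * logCutoffProfileDeriv ε r ^ 2 = (-log ε)⁻¹ := by
  obtain ⟨hε0, hε1⟩ := hε
  have hε2 : 0 < ε ^ 2 := by positivity
  have hsub : Ioo (ε ^ 2) ε ⊆ Ioi 0 := fun r hr => hε2.trans hr.1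
  have hintegrand : (fun r => r * logCutoffProfileDeriv ε r ^ 2) =
      (Ioo (ε ^ 2) ε).indicator fun r => (log ε ^ 2)⁻¹ * r⁻¹ := by
    ext r
    by_cases hr : r ∈ Ioo (ε ^ 2) ε
    · have hr0 : r ≠ 0 := (hε2.trans hr.1).ne'
      rw [logCutoffProfileDeriv, indicator_of_mem hr, indicator_of_mem hr]
      field_simp
    · simp [logCutoffProfileDeriv, indicator_of_notMem hr]
  rw [hintegrand, setIntegral_indicator measurableSet_Ioo,
    inter_eq_right.2 hsub, ← integral_Ioc_eq_integral_Ioo,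
    ← intervalIntegral.integral_of_le (pow_le_of_le_one hε0.le hε1.le two_ne_zero),
    intervalIntegral.integral_const_mul, integral_inv_of_pos hε2 hε0,
    log_div hε0.ne' hε2.ne', log_pow]
  field_simp
  ring

theorem integral_logCutoffProfileDeriv_sq_norm {ε : ℝ} (hε : ε ∈ Ioo 0 1) :
    ∫ x : EuclideanSpace ℝ (Fin 2), logCutoffProfileDeriv ε ‖x‖ ^ 2 = 2 * π / log (1 / ε) := by
  rw [integral_fun_norm_addHaar volume fun r => logCutoffProfileDeriv ε r ^ 2]
  simp [Measure.real, setIntegral_Ioi_mul_logCutoffProfileDeriv_sq hε, pi_nonneg]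
  ring

/-- Zero-capacity computation for the logarithmic cutoff on `ℝ²`: for each
`ε ∈ (0,1)` the squared gradient norm (with the gradient taken to be the Fréchet derivative
where it exists and `0` elsewhere, i.e. `fderiv`) is integrable with total integral
`2π / log(1/ε)`; in particular the Dirichlet energy tends to `0` as `ε → 0⁺`. -/
theorem logCutoff_energy :
    (∀ ε ∈ Set.Ioo (0 : ℝ) 1,
      Integrable (fun x : EuclideanSpace ℝ (Fin 2) => ‖fderiv ℝ (logCutoff ε) x‖ ^ 2) volume ∧
      ∫ x : EuclideanSpace ℝ (Fin 2), ‖fderiv ℝ (logCutoff ε) x‖ ^ 2 ∂volume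
        = 2 * Real.pi / Real.log (1 / ε)) ∧
    Filter.Tendsto
      (fun ε : ℝ => ∫ x : EuclideanSpace ℝ (Fin 2), ‖fderiv ℝ (logCutoff ε) x‖ ^ 2 ∂volume)
      (nhdsWithin 0 (Set.Ioi 0)) (nhds 0) := by
  have energy (ε : ℝ) (hε : ε ∈ Ioo 0 1) :
      ∫ x : EuclideanSpace ℝ (Fin 2), ‖fderiv ℝ (logCutoff ε) x‖ ^ 2 = 2 * π / log (1 / ε) := by
    rw [integral_congr_ae (norm_fderiv_logCutoff_sq_ae
      (pow_le_of_le_one hε.1.le hε.2.le two_ne_zero)), integral_logCutoffProfileDeriv_sq_norm hε]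
  have hlog : Tendsto (fun ε : ℝ => log (1 / ε)) (𝓝[>] 0) atTop := by
    simpa only [one_div, Function.comp_def] using tendsto_log_atTop.comp tendsto_inv_nhdsGT_zero
  refine ⟨fun ε hε => ⟨?_, energy ε hε⟩, ?_⟩
  · refine Integrable.of_integral_ne_zero ?_
    rw [energy ε hε]
    exact div_ne_zero (by positivity) (log_pos (one_lt_one_div hε.1 hε.2)).ne'
  · refine ((tendsto_const_nhds (x := 2 * π)).div_atTop hlog).congr' ?_
    filter_upwards [Ioo_mem_nhdsGT one_pos] with ε hε using (energy ε hε).symm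
end

section
/- Let E be a real inner product space, let v, w ∈ E, and let d ∈ [0, π) and R ∈ (0, π/2) be real numbers. Then ‖cos R · cos(d/2) · w − (1/2) sin R · sin(d/2) · v‖² / (1 − sin²R · cos²(d/2)) − (1/4)‖v‖² − cos²(d/2)·‖w‖² = −(cos⁴R · cos⁴(d/2) / (1 − sin²R · cos²(d/2))) · ‖(1/(2 cos R · cos²(d/2)))·v + (sin R · tan(d/2)/cos²R)·w‖². -/
/-!
Put `c = cos R`, `s = sin R`, `a = cos (d/2)`, `b = sin (d/2)`, `p = v/2` and `q = a w`. The
vector in the first norm is `c q - s b p`, and the vector in the last norm is `c p + s b q` scaled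
by `1 / (c² a²)`. These two form a rotation of `(q, p)` scaled by `√(c² + s² b²)`, so their squared
norms add up to `(c² + s² b²)(‖p‖² + ‖q‖²)`; and `c² + s² b² = 1 - s² a²` is the denominator.
-/

open Real

theorem norm_smul_sub_smul_sq_add_norm_smul_add_smul_sq {E : Type*} [NormedAddCommGroup E]
    [InnerProductSpace ℝ E] (α β : ℝ) (x y : E) :
    ‖α • x - β • y‖ ^ 2 + ‖α • y + β • x‖ ^ 2 = (α ^ 2 + β ^ 2) * (‖x‖ ^ 2 + ‖y‖ ^ 2) := by
  rw [norm_sub_sq_real, norm_add_sq_real]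
  simp only [inner_smul_left, inner_smul_right, norm_smul, real_inner_comm x y,
    RCLike.conj_to_real, Real.norm_eq_abs, mul_pow, sq_abs]
  ring

theorem one_sub_sin_sq_mul_cos_sq (R x : ℝ) :
    1 - sin R ^ 2 * cos x ^ 2 = cos R ^ 2 + sin R ^ 2 * sin x ^ 2 := by
  linear_combination -sin_sq_add_cos_sq R - sin R ^ 2 * sin_sq_add_cos_sq x

/-- The 'direct computation' identity in the proof of energy convexity for maps
into CAT(1) spaces: for vectors `v, w` in a real inner product space and `d ∈ [0,π)`,
`R ∈ (0,π/2)`,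
`‖cos R cos(d/2) w − (1/2) sin R sin(d/2) v‖²/(1 − sin²R cos²(d/2)) − (1/4)‖v‖² − cos²(d/2)‖w‖²
= −(cos⁴R cos⁴(d/2)/(1 − sin²R cos²(d/2))) ‖(1/(2 cos R cos²(d/2))) v
+ (sin R tan(d/2)/cos²R) w‖²`. -/
theorem energy_convexity_gradient_identity {E : Type*} [NormedAddCommGroup E]
    [InnerProductSpace ℝ E] (v w : E) (d R : ℝ)
    (hd : d ∈ Set.Ico 0 Real.pi) (hR : R ∈ Set.Ioo 0 (Real.pi / 2)) :
    ‖(Real.cos R * Real.cos (d / 2)) • w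
        - ((1 / 2) * Real.sin R * Real.sin (d / 2)) • v‖ ^ 2
        / (1 - Real.sin R ^ 2 * Real.cos (d / 2) ^ 2)
      - (1 / 4) * ‖v‖ ^ 2 - Real.cos (d / 2) ^ 2 * ‖w‖ ^ 2
    = -(Real.cos R ^ 4 * Real.cos (d / 2) ^ 4
          / (1 - Real.sin R ^ 2 * Real.cos (d / 2) ^ 2))
        * ‖(1 / (2 * Real.cos R * Real.cos (d / 2) ^ 2)) • v
            + (Real.sin R * Real.tan (d / 2) / Real.cos R ^ 2) • w‖ ^ 2 := by
  rw [tan_eq_sin_div_cos]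
  set c := cos R
  set s := sin R
  set a := cos (d / 2)
  set b := sin (d / 2)
  have hc : 0 < c := cos_pos_of_mem_Ioo ⟨by linarith [hR.1, pi_pos], hR.2⟩
  have ha : 0 < a := cos_pos_of_mem_Ioo ⟨by linarith [hd.1, pi_pos], by linarith [hd.2]⟩
  have hden : 1 - s ^ 2 * a ^ 2 = c ^ 2 + (s * b) ^ 2 := by
    rw [one_sub_sin_sq_mul_cos_sq]; ring
  have hden_pos : 0 < c ^ 2 + (s * b) ^ 2 := by positivity
  have hfirst : (c * a) • w - ((1 / 2) * s * b) • v = c • (a • w) - (s * b) • ((1 / 2 : ℝ) • v) := by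
    module
  have hlast : (1 / (2 * c * a ^ 2)) • v + (s * (b / a) / c ^ 2) • w
      = (c ^ 2 * a ^ 2)⁻¹ • (c • ((1 / 2 : ℝ) • v) + (s * b) • (a • w)) := by
    match_scalars <;> field_simp
  have hsum := norm_smul_sub_smul_sq_add_norm_smul_add_smul_sq c (s * b) (a • w) ((1 / 2 : ℝ) • v)
  rw [hden, hfirst, hlast, norm_smul, mul_pow, norm_inv, norm_of_nonneg (by positivity),
    eq_sub_of_add_eq hsum]
  simp only [norm_smul, mul_pow, norm_of_nonneg ha.le, norm_of_nonneg (by norm_num : (0 : ℝ) ≤ 1 / 2)]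
  field_simp
  ring
end
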